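/- In the free unital non-associative algebra k{x,y,z} over a field of characteristic zero, the element p(x;y;z) := Σ (x₍₁₎y₍₁₎)\(x₍₂₎, y₍₂₎, z), where (a,b,c) = (ab)c − a(bc) is the associator and \ is the Hopf left division, equals the associator (x,y,z) = (xy)z − x(yz) when x, y, z are the (primitive) generators; moreover this element is primitive, i.e. Δ(p(x;y;z)) = p(x;y;z) ⊗ 1 + 1 ⊗ p(x;y;z). -/

import Mathlib

/- STATEMENT 1: In k{x,y,z}, the element p(x;y;z) := Σ (x₍₁₎y₍₁₎)\(x₍₂₎, y₍₂₎, z)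
equals the associator (x,y,z) = (xy)z − x(yz) when x, y, z are the primitive
generators, and this element is primitive. -/

open TensorProduct

noncomputable section

variable (K : Type*) [Field K] [CharZero K]

/-- The free unital non-associative algebra on three generators x, y, z. -/
abbrev F3 := MonoidAlgebra K (WithOne (FreeMagma (Fin 3)))

def gen3 (i : Fin 3) : F3 K :=
  MonoidAlgebra.single (↑(FreeMagma.of i) : WithOne (FreeMagma (Fin 3))) 1

/-- For fixed `u2` and `z`, the linear map `v2 ↦ (u2*v2)*z - u2*(v2*z)` (an associator). -/
def ascMap (u2 z : F3 K) : F3 K →ₗ[K] F3 K :=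
  ((LinearMap.mul K (F3 K)).flip z).comp ((LinearMap.mul K (F3 K)) u2) -
    ((LinearMap.mul K (F3 K)) u2).comp ((LinearMap.mul K (F3 K)).flip z)

/-- The quadrilinear map `(u1, u2) ↦ ((v1, v2) ↦ (u1*v1) \ (u2, v2, z))`, packaged so
that it can be applied to the Sweedler sums `Δ u` and `Δ v`. -/
def pAux (ldiv : F3 K →ₗ[K] F3 K →ₗ[K] F3 K) (z : F3 K) :
    F3 K →ₗ[K] F3 K →ₗ[K] (F3 K ⊗[K] F3 K →ₗ[K] F3 K) :=
  LinearMap.mk₂ K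
    (fun u1 u2 => TensorProduct.lift
      (ldiv.compl₁₂ ((LinearMap.mul K (F3 K)) u1) (ascMap K u2 z)))
    (fun u1 u1' u2 => by
      apply TensorProduct.ext'; intro v1 v2
      simp [LinearMap.compl₁₂_apply, add_mul])
    (fun c u1 u2 => by
      apply TensorProduct.ext'; intro v1 v2
      simp [LinearMap.compl₁₂_apply, smul_mul_assoc])
    (fun u1 u2 u2' => by
      apply TensorProduct.ext'; intro v1 v2
      simp [LinearMap.compl₁₂_apply, ascMap, add_mul, mul_add]
      abel)
    (fun c u1 u2 => by
      apply TensorProduct.ext'; intro v1 v2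
      simp [LinearMap.compl₁₂_apply, ascMap, smul_mul_assoc, mul_smul_comm, smul_sub])

/-- The Shestakov–Umirbaev element `p(u; v; z) = Σ (u₍₁₎v₍₁₎)\(u₍₂₎, v₍₂₎, z)`. -/
def pOp (Δ : F3 K →ₗ[K] F3 K ⊗[K] F3 K) (ldiv : F3 K →ₗ[K] F3 K →ₗ[K] F3 K)
    (u v z : F3 K) : F3 K :=
  (TensorProduct.lift (pAux K ldiv z) (Δ u)) (Δ v)


section Primitive

variable {R A : Type*} [CommSemiring R] [NonAssocRing A] [Module R A] [SMulCommClass R A A]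
  [IsScalarTower R A A]

def IsPrimitive (Δ : A →ₗ[R] A ⊗[R] A) (a : A) : Prop :=
  Δ a = a ⊗ₜ[R] 1 + 1 ⊗ₜ[R] a

@[simp]
theorem associator_one_left (y z : A) : associator 1 y z = 0 := by
  simp [associator]

@[simp]
theorem associator_one_mid (x z : A) : associator x 1 z = 0 := by
  simp [associator]

theorem associator_tmul_one_add_one_tmul (a b c : A) :
    associator (a ⊗ₜ[R] 1 + 1 ⊗ₜ[R] a) (b ⊗ₜ[R] 1 + 1 ⊗ₜ[R] b) (c ⊗ₜ[R] 1 + 1 ⊗ₜ[R] c) =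
      associator a b c ⊗ₜ[R] 1 + 1 ⊗ₜ[R] associator a b c := by
  simp only [associator, add_mul, mul_add, Algebra.TensorProduct.tmul_mul_tmul, one_mul,
    mul_one, TensorProduct.sub_tmul, TensorProduct.tmul_sub]
  abel

theorem isPrimitive_associator {Δ : A →ₗ[R] A ⊗[R] A} (hΔmul : ∀ u v, Δ (u * v) = Δ u * Δ v)
    {a b c : A} (ha : IsPrimitive Δ a) (hb : IsPrimitive Δ b) (hc : IsPrimitive Δ c) :
    IsPrimitive Δ (associator a b c) := by
  have hΔ : Δ (associator a b c) = associator (Δ a) (Δ b) (Δ c) := by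
    simp only [associator, map_sub, hΔmul]
  rw [IsPrimitive, hΔ, ha, hb, hc, associator_tmul_one_add_one_tmul]

theorem ldiv_one_left {Δ : A →ₗ[R] A ⊗[R] A} {ε : A →ₗ[R] R} {ldiv : A →ₗ[R] A →ₗ[R] A}
    (hΔone : Δ 1 = 1 ⊗ₜ[R] 1) (hεone : ε 1 = 1)
    (hldiv : ∀ u v, TensorProduct.lift
        (ldiv.compl₂ ((LinearMap.mul R A).flip v)) (Δ u) = ε u • v) (w : A) :
    ldiv 1 w = w := by
  simpa [hΔone, hεone] using hldiv 1 w

end Primitive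

section ShestakovUmirbaev

variable {k : Type*} [Field k]

theorem pAux_apply_tmul (ldiv : F3 k →ₗ[k] F3 k →ₗ[k] F3 k) (z u₁ u₂ v₁ v₂ : F3 k) :
    pAux k ldiv z u₁ u₂ (v₁ ⊗ₜ[k] v₂) = ldiv (u₁ * v₁) (associator u₂ v₂ z) := rfl

/-- Of the four Sweedler terms of `p(u; v; z)` only `(1 · 1)\(u, v, z)` survives, since an
associator with a unit in its first two slots vanishes. -/
theorem pOp_of_isPrimitive {Δ : F3 k →ₗ[k] F3 k ⊗[k] F3 k} (ldiv : F3 k →ₗ[k] F3 k →ₗ[k] F3 k)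
    {u v : F3 k} (hu : IsPrimitive Δ u) (hv : IsPrimitive Δ v) (z : F3 k) :
    pOp k Δ ldiv u v z = ldiv 1 (associator u v z) := by
  rw [IsPrimitive] at hu hv
  simp [pOp, hu, hv, pAux_apply_tmul]

end ShestakovUmirbaev

theorem p_of_generators_eq_associator_and_primitive
    (Δ : F3 K →ₗ[K] F3 K ⊗[K] F3 K) (ε : F3 K →ₗ[K] K)
    (ldiv : F3 K →ₗ[K] F3 K →ₗ[K] F3 K)
    (hΔmul : ∀ u v, Δ (u * v) = Δ u * Δ v)
    (hΔone : Δ 1 = 1 ⊗ₜ[K] 1)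
    (hΔgen : ∀ i, Δ (gen3 K i) = gen3 K i ⊗ₜ[K] 1 + 1 ⊗ₜ[K] gen3 K i)
    (hεone : ε 1 = 1)
    (hldiv₁ : ∀ u v, TensorProduct.lift
        (ldiv.compl₂ ((LinearMap.mul K (F3 K)).flip v)) (Δ u) = ε u • v) :
    pOp K Δ ldiv (gen3 K 0) (gen3 K 1) (gen3 K 2) =
        (gen3 K 0 * gen3 K 1) * gen3 K 2 - gen3 K 0 * (gen3 K 1 * gen3 K 2) ∧
      Δ (pOp K Δ ldiv (gen3 K 0) (gen3 K 1) (gen3 K 2)) =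
        pOp K Δ ldiv (gen3 K 0) (gen3 K 1) (gen3 K 2) ⊗ₜ[K] 1 +
          1 ⊗ₜ[K] pOp K Δ ldiv (gen3 K 0) (gen3 K 1) (gen3 K 2) := by
  have hp : pOp K Δ ldiv (gen3 K 0) (gen3 K 1) (gen3 K 2) =
      associator (gen3 K 0) (gen3 K 1) (gen3 K 2) := by
    rw [pOp_of_isPrimitive ldiv (hΔgen 0) (hΔgen 1), ldiv_one_left hΔone hεone hldiv₁]
  refine ⟨hp, ?_⟩
  rw [hp]
  exact isPrimitive_associator hΔmul (hΔgen 0) (hΔgen 1) (hΔgen 2)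

end
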